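/- In the Moore-SSM with A = I, the state trajectory starting from any one-hot vector e_{s₀} and driven by consistent inputs μ_t = e_{(q_t, σ_{t+1})} remains in the set of one-hot vectors {e_s : s ∈ S} for all time steps; in particular every reachable SSM state vector has exactly one coordinate equal to 1 and all others 0. -/

import Mathlib

def mooreB {S Γ : Type*} [Fintype S] [Fintype Γ] [DecidableEq S] [DecidableEq Γ]
    (T : S × Γ → S) : Matrix S (S × Γ) ℝ :=
  Matrix.of fun s'' p => (Pi.single (T p) 1 - Pi.single p.1 1 : S → ℝ) s''

def Tstar {S Γ : Type*} (T : S × Γ → S) (s : S) (w : List Γ) : S :=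
  w.foldl (fun q σ => T (q, σ)) s

/-! A consistent input moves the one-hot state `e_q` along the column `e_{T(q,σ)} - e_q` of `B`,
so by induction the state at time `t` is exactly `e_{q_t}`, the one-hot vector of the state the
automaton reaches after reading the first `t` letters. -/

section

variable {S Γ : Type*}

@[simp]
lemma Tstar_nil (T : S × Γ → S) (s : S) : Tstar T s [] = s := rfl

lemma Tstar_append_singleton (T : S × Γ → S) (s : S) (w : List Γ) (σ : Γ) :
    Tstar T s (w ++ [σ]) = T (Tstar T s w, σ) := by
  simp only [Tstar, List.foldl_append, List.foldl_cons, List.foldl_nil]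

lemma Tstar_take_succ (T : S × Γ → S) (s : S) (w : List Γ) {n : ℕ} (hn : n < w.length) :
    Tstar T s (w.take (n + 1)) = T (Tstar T s (w.take n), w[n]) := by
  rw [List.take_succ_eq_append_getElem hn, Tstar_append_singleton]

variable [Fintype S] [Fintype Γ] [DecidableEq S] [DecidableEq Γ]

lemma mooreB_mulVec_single (T : S × Γ → S) (p : S × Γ) :
    (mooreB T).mulVec (Pi.single p 1) = (Pi.single (T p) 1 - Pi.single p.1 1 : S → ℝ) := by
  ext i
  simp [Matrix.mulVec, dotProduct, mooreB, Pi.single_apply]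

lemma single_add_mooreB_mulVec_single (T : S × Γ → S) (q : S) (σ : Γ) :
    Pi.single q 1 + (mooreB T).mulVec (Pi.single (q, σ) 1) = (Pi.single (T (q, σ)) 1 : S → ℝ) := by
  rw [mooreB_mulVec_single, add_sub_cancel]

end

/-- The SSM trajectory started at a one-hot vector and driven by consistent inputs
remains in the set of one-hot vectors: at every step there is exactly one
coordinate equal to `1` and all others are `0`. -/
theorem stmt_8 {S Γ : Type*} [Fintype S] [Fintype Γ] [DecidableEq S] [DecidableEq Γ]
    (T : S × Γ → S) (s₀ : S) (w : List Γ) (x : ℕ → (S → ℝ))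
    (hx0 : x 0 = Pi.single s₀ 1)
    (hstep : ∀ t (h : t < w.length),
      x (t + 1) = x t
        + (mooreB T).mulVec (Pi.single (Tstar T s₀ (w.take t), w.get ⟨t, h⟩) 1)) :
    ∀ t ≤ w.length, ∃ s : S, x t = Pi.single s 1 := by
  have hx : ∀ t ≤ w.length, x t = Pi.single (Tstar T s₀ (w.take t)) 1 := by
    intro t ht
    induction t with
    | zero => simpa using hx0
    | succ n ih =>
      have hn : n < w.length := by omega
      rw [hstep n hn, ih hn.le, Tstar_take_succ T s₀ w hn]
      exact single_add_mooreB_mulVec_single T _ _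
  exact fun t ht => ⟨_, hx t ht⟩
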